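/- (Proposition 3: the dual maximizer yields the volume-preserving primal minimizer via softmax.) Let Ω be a finite nonempty set, I ≥ 1, ε > 0, let c : Ω → ℝ^I, let V ∈ ℝ^I, and define the dual objective D(q) = ∑_{i=1}^I q_i V_i − ε ∑_{x ∈ Ω} log( ∑_{i=1}^I exp((c_i(x) + q_i)/ε) ) for q ∈ ℝ^I. Suppose q̃ ∈ ℝ^I is a global maximizer of D. Define ũ : Ω → ℝ^I pointwise by ũ(x) = S_ε(c(x) + q̃), i.e. ũ_i(x) = exp((c_i(x) + q̃_i)/ε) / ∑_{j=1}^I exp((c_j(x) + q̃_j)/ε). Then: (a) ũ(x) ∈ U for every x and ∑_{x ∈ Ω} ũ_i(x) = V_i for every i; (b) the primal value at ũ equals D(q̃), i.e. ∑_{x ∈ Ω} ∑_{i=1}^I [ −c_i(x) ũ_i(x) + ε ũ_i(x) log(ũ_i(x)) ] = D(q̃); consequently ũ minimizes the primal energy over all u : Ω → ℝ^I with u(x) ∈ U for every x and ∑_{x ∈ Ω} u_i(x) = V_i for every i. -/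

import Mathlib

/-!
Along the line `t ↦ q̃ + t eᵢ` the dual objective is differentiable with derivative
`Vᵢ - ∑ₓ S_ε(c(x) + q̃)ᵢ` at `t = 0`, so maximality of `q̃` gives the volume constraints.
For every `u` satisfying the volume constraints the primal energy equals
`⟨q̃, V⟩ + ∑ₓ E_ε(c(x) + q̃, u(x))`, and the Gibbs variational principle
`-ε log ∑ᵢ exp (oᵢ / ε) ≤ E_ε(o, u)` on the simplex, with equality at `u = S_ε(o)`, bounds this
below by `D(q̃)`, with equality at `ũ`.
-/

open Finset Real

theorem sub_le_mul_log_sub_mul_log {u p : ℝ} (hu : 0 ≤ u) (hp : 0 < p) :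
    u - p ≤ u * log u - u * log p := by
  rcases hu.eq_or_lt with rfl | hu
  · simpa using hp.le
  · have h := mul_le_mul_of_nonneg_left (log_le_sub_one_of_pos (div_pos hp hu)) hu.le
    rw [log_div hp.ne' hu.ne', mul_sub, mul_sub, mul_one, mul_div_cancel₀ _ hu.ne'] at h
    linarith

theorem sum_mul_log_sub_mul_log_nonneg {ι : Type*} [Fintype ι] {u p : ι → ℝ}
    (hu : ∀ i, 0 ≤ u i) (hp : ∀ i, 0 < p i) (hup : ∑ i, u i = ∑ i, p i) :
    0 ≤ ∑ i, (u i * log (u i) - u i * log (p i)) :=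
  calc (0 : ℝ) = ∑ i, (u i - p i) := by rw [sum_sub_distrib, hup, sub_self]
    _ ≤ _ := sum_le_sum fun i _ => sub_le_mul_log_sub_mul_log (hu i) (hp i)

section Softmax

variable {ι : Type*} [Fintype ι]

noncomputable def softmax (ε : ℝ) (o : ι → ℝ) (i : ι) : ℝ :=
  exp (o i / ε) / ∑ j, exp (o j / ε)

/-- With `Real.log 0 = 0` this builds in the convention `0 * log 0 = 0`. -/
noncomputable def entropicEnergy (ε : ℝ) (o u : ι → ℝ) : ℝ :=
  ∑ i, (-(o i * u i) + ε * u i * log (u i))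

theorem entropicEnergy_add (ε : ℝ) (o q u : ι → ℝ) :
    entropicEnergy ε (o + q) u = entropicEnergy ε o u - ∑ i, q i * u i := by
  simp only [entropicEnergy, ← sum_sub_distrib, Pi.add_apply]
  exact sum_congr rfl fun i _ => by ring

variable [Nonempty ι] (ε : ℝ) (o : ι → ℝ)

theorem sum_exp_div_pos : 0 < ∑ j, exp (o j / ε) :=
  sum_pos (fun _ _ => exp_pos _) univ_nonempty

theorem softmax_pos (i : ι) : 0 < softmax ε o i :=
  div_pos (exp_pos _) (sum_exp_div_pos ε o)

theorem sum_softmax : ∑ i, softmax ε o i = 1 := by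
  simp only [softmax, ← sum_div, div_self (sum_exp_div_pos ε o).ne']

theorem log_softmax (i : ι) : log (softmax ε o i) = o i / ε - log (∑ j, exp (o j / ε)) := by
  rw [softmax, log_div (exp_ne_zero _) (sum_exp_div_pos ε o).ne', log_exp]

variable {ε}

theorem entropicEnergy_eq_sub {u : ι → ℝ} (hε : ε ≠ 0) (hu : ∑ i, u i = 1) :
    entropicEnergy ε o u = ε * ∑ i, (u i * log (u i) - u i * log (softmax ε o i))
      - ε * log (∑ j, exp (o j / ε)) := by
  simp only [log_softmax]
  set L := log (∑ j, exp (o j / ε))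
  calc entropicEnergy ε o u
      = ∑ i, (ε * (u i * log (u i) - u i * (o i / ε - L)) - ε * L * u i) :=
        sum_congr rfl fun i _ => by field_simp; ring
    _ = _ := by rw [sum_sub_distrib, ← mul_sum, ← mul_sum, hu, mul_one]

theorem neg_mul_log_sum_exp_le_entropicEnergy {u : ι → ℝ} (hε : 0 < ε) (hu0 : ∀ i, 0 ≤ u i)
    (hu : ∑ i, u i = 1) :
    -(ε * log (∑ j, exp (o j / ε))) ≤ entropicEnergy ε o u := by
  rw [entropicEnergy_eq_sub o hε.ne' hu, sub_eq_add_neg, le_add_iff_nonneg_left]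
  exact mul_nonneg hε.le <| sum_mul_log_sub_mul_log_nonneg hu0 (softmax_pos ε o)
    (hu.trans (sum_softmax ε o).symm)

theorem entropicEnergy_softmax (hε : ε ≠ 0) :
    entropicEnergy ε o (softmax ε o) = -(ε * log (∑ j, exp (o j / ε))) := by
  simp [entropicEnergy_eq_sub o hε (sum_softmax ε o)]

theorem hasDerivAt_log_sum_exp_line (d : ι → ℝ) :
    HasDerivAt (fun t : ℝ => log (∑ j, exp ((o j + t * d j) / ε)))
      ((∑ j, softmax ε o j * d j) / ε) 0 := by
  have hsum : HasDerivAt (fun t : ℝ => ∑ j, exp ((o j + t * d j) / ε))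
      (∑ j, exp (o j / ε) * (d j / ε)) 0 := by
    refine HasDerivAt.fun_sum fun j _ => ?_
    simpa using (((hasDerivAt_id (0 : ℝ)).mul_const (d j)).const_add (o j)).div_const ε |>.exp
  convert hsum.log (by simpa using (sum_exp_div_pos ε o).ne') using 1
  simp only [softmax, zero_mul, add_zero, sum_div, div_mul_eq_mul_div, mul_div_assoc, div_right_comm]

end Softmax

section Duality

variable {Ω ι : Type*} [Fintype Ω] [Fintype ι] {ε : ℝ} (c : Ω → ι → ℝ) (V : ι → ℝ)

noncomputable def dualObjective (ε : ℝ) (c : Ω → ι → ℝ) (V q : ι → ℝ) : ℝ :=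
  (∑ i, q i * V i) - ε * ∑ x, log (∑ i, exp ((c x i + q i) / ε))

theorem dualObjective_eq_add_sum (q : ι → ℝ) :
    dualObjective ε c V q = ∑ i, q i * V i + ∑ x, -(ε * log (∑ i, exp ((c x + q) i / ε))) := by
  rw [dualObjective, sum_neg_distrib, mul_sum, sub_eq_add_neg]
  rfl

theorem sum_entropicEnergy_add_of_volume {u : Ω → ι → ℝ} (hV : ∀ i, ∑ x, u x i = V i)
    (q : ι → ℝ) :
    ∑ x, entropicEnergy ε (c x) (u x) = ∑ i, q i * V i + ∑ x, entropicEnergy ε (c x + q) (u x) := by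
  simp only [entropicEnergy_add, sum_sub_distrib, ← hV, mul_sum]
  rw [sum_comm (f := fun i x => q i * u x i)]
  ring

theorem dualObjective_le_sum_entropicEnergy [Nonempty ι] (hε : 0 < ε) {u : Ω → ι → ℝ}
    (hU : ∀ x, (∀ i, 0 ≤ u x i) ∧ ∑ i, u x i = 1) (hV : ∀ i, ∑ x, u x i = V i) (q : ι → ℝ) :
    dualObjective ε c V q ≤ ∑ x, entropicEnergy ε (c x) (u x) := by
  rw [dualObjective_eq_add_sum, sum_entropicEnergy_add_of_volume c V hV q]
  gcongr with x
  exact neg_mul_log_sum_exp_le_entropicEnergy _ hε (hU x).1 (hU x).2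

theorem sum_entropicEnergy_softmax [Nonempty ι] (hε : ε ≠ 0) {q : ι → ℝ}
    (hV : ∀ i, ∑ x, softmax ε (c x + q) i = V i) :
    ∑ x, entropicEnergy ε (c x) (softmax ε (c x + q)) = dualObjective ε c V q := by
  simp only [sum_entropicEnergy_add_of_volume c V hV q, entropicEnergy_softmax _ hε,
    dualObjective_eq_add_sum]

theorem hasDerivAt_dualObjective_line [Nonempty ι] (hε : ε ≠ 0) (q d : ι → ℝ) :
    HasDerivAt (fun t : ℝ => dualObjective ε c V (q + t • d))
      (∑ i, d i * V i - ∑ x, ∑ i, softmax ε (c x + q) i * d i) 0 := by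
  have hlin : HasDerivAt (fun t : ℝ => ∑ i, (q i + t * d i) * V i) (∑ i, d i * V i) 0 :=
    HasDerivAt.fun_sum fun i _ => by
      simpa using (((hasDerivAt_id (0 : ℝ)).mul_const (d i)).const_add (q i)).mul_const (V i)
  have hlse := HasDerivAt.fun_sum fun x (_ : x ∈ univ) =>
    hasDerivAt_log_sum_exp_line (ε := ε) (c x + q) d
  have h := hlin.fun_sub (hlse.const_mul ε)
  rw [← sum_div, mul_div_cancel₀ _ hε] at h
  have hfun : (fun t : ℝ => dualObjective ε c V (q + t • d)) = fun t : ℝ =>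
      ∑ i, (q i + t * d i) * V i - ε * ∑ x, log (∑ j, exp (((c x + q) j + t * d j) / ε)) := by
    funext t
    simp only [dualObjective, Pi.add_apply, Pi.smul_apply, smul_eq_mul, add_assoc]
  rw [hfun]
  exact h

theorem sum_softmax_eq_of_forall_dualObjective_le [Nonempty ι] (hε : ε ≠ 0) {q : ι → ℝ}
    (hq : ∀ q', dualObjective ε c V q' ≤ dualObjective ε c V q) (i : ι) :
    ∑ x, softmax ε (c x + q) i = V i := by
  classical
  have hmax : IsLocalMax (fun t : ℝ => dualObjective ε c V (q + t • Pi.single i 1)) 0 :=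
    Filter.Eventually.of_forall fun t => by simpa using hq (q + t • Pi.single i 1)
  have := hmax.hasDerivAt_eq_zero (hasDerivAt_dualObjective_line c V hε q (Pi.single i 1))
  simp [Pi.single_apply] at this
  linarith

end Duality

theorem vp_std_dual_maximizer_gives_primal_minimizer_general
    (Ω : Type*) [Fintype Ω] (I : ℕ) (hI : 1 ≤ I) (ε : ℝ) (hε : 0 < ε)
    (c : Ω → Fin I → ℝ) (V : Fin I → ℝ)
    (qt : Fin I → ℝ)
    (hqt : ∀ q : Fin I → ℝ,
      (∑ i, q i * V i) - ε * ∑ x : Ω, Real.log (∑ i, Real.exp ((c x i + q i) / ε))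
      ≤ (∑ i, qt i * V i) - ε * ∑ x : Ω, Real.log (∑ i, Real.exp ((c x i + qt i) / ε)))
    (ut : Ω → Fin I → ℝ)
    (hut : ∀ x i, ut x i =
      Real.exp ((c x i + qt i) / ε) / ∑ j, Real.exp ((c x j + qt j) / ε)) :
    (∀ x, (∀ i, 0 ≤ ut x i) ∧ ∑ i, ut x i = 1) ∧
    (∀ i, ∑ x : Ω, ut x i = V i) ∧
    (∑ x : Ω, ∑ i, (-(c x i * ut x i) + ε * ut x i * Real.log (ut x i))
      = (∑ i, qt i * V i)
        - ε * ∑ x : Ω, Real.log (∑ i, Real.exp ((c x i + qt i) / ε))) ∧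
    (∀ u : Ω → Fin I → ℝ,
      (∀ x, (∀ i, 0 ≤ u x i) ∧ ∑ i, u x i = 1) →
      (∀ i, ∑ x : Ω, u x i = V i) →
      ∑ x : Ω, ∑ i, (-(c x i * ut x i) + ε * ut x i * Real.log (ut x i))
        ≤ ∑ x : Ω, ∑ i, (-(c x i * u x i) + ε * u x i * Real.log (u x i))) := by
  have : Nonempty (Fin I) := ⟨⟨0, hI⟩⟩
  obtain rfl : ut = fun x => softmax ε (c x + qt) := funext fun x => funext (hut x)
  have hU : ∀ x, (∀ i, 0 ≤ softmax ε (c x + qt) i) ∧ ∑ i, softmax ε (c x + qt) i = 1 :=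
    fun x => ⟨fun i => (softmax_pos ε _ i).le, sum_softmax ε _⟩
  have hV : ∀ i, ∑ x, softmax ε (c x + qt) i = V i :=
    sum_softmax_eq_of_forall_dualObjective_le c V hε.ne' hqt
  have hvalue : ∑ x, entropicEnergy ε (c x) (softmax ε (c x + qt)) = dualObjective ε c V qt :=
    sum_entropicEnergy_softmax c V hε.ne' hV
  exact ⟨hU, hV, hvalue, fun u hu huV =>
    hvalue.trans_le (dualObjective_le_sum_entropicEnergy c V hε hu huV qt)⟩

/-- Proposition 3: if `q̃` maximizes the dual objective
`D(q) = ⟨q,V⟩ - ε ∑ₓ log ∑ᵢ exp((cᵢ(x)+qᵢ)/ε)`, then `ũ(x) = Sε(c(x) + q̃)` is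
primal-feasible (pointwise in the simplex with the prescribed volumes), its primal
value equals `D(q̃)`, and it minimizes the primal energy over all feasible fields. -/
theorem vp_std_dual_maximizer_gives_primal_minimizer
    (Ω : Type*) [Fintype Ω] [Nonempty Ω] (I : ℕ) (hI : 1 ≤ I) (ε : ℝ) (hε : 0 < ε)
    (c : Ω → Fin I → ℝ) (V : Fin I → ℝ)
    (qt : Fin I → ℝ)
    (hqt : ∀ q : Fin I → ℝ,
      (∑ i, q i * V i) - ε * ∑ x : Ω, Real.log (∑ i, Real.exp ((c x i + q i) / ε))
      ≤ (∑ i, qt i * V i) - ε * ∑ x : Ω, Real.log (∑ i, Real.exp ((c x i + qt i) / ε)))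
    (ut : Ω → Fin I → ℝ)
    (hut : ∀ x i, ut x i =
      Real.exp ((c x i + qt i) / ε) / ∑ j, Real.exp ((c x j + qt j) / ε)) :
    (∀ x, (∀ i, 0 ≤ ut x i) ∧ ∑ i, ut x i = 1) ∧
    (∀ i, ∑ x : Ω, ut x i = V i) ∧
    (∑ x : Ω, ∑ i, (-(c x i * ut x i) + ε * ut x i * Real.log (ut x i))
      = (∑ i, qt i * V i)
        - ε * ∑ x : Ω, Real.log (∑ i, Real.exp ((c x i + qt i) / ε))) ∧
    (∀ u : Ω → Fin I → ℝ,
      (∀ x, (∀ i, 0 ≤ u x i) ∧ ∑ i, u x i = 1) →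
      (∀ i, ∑ x : Ω, u x i = V i) →
      ∑ x : Ω, ∑ i, (-(c x i * ut x i) + ε * ut x i * Real.log (ut x i))
        ≤ ∑ x : Ω, ∑ i, (-(c x i * u x i) + ε * u x i * Real.log (u x i))) :=
  vp_std_dual_maximizer_gives_primal_minimizer_general Ω I hI ε hε c V qt hqt ut hut
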